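/- Let ψ ∈ L¹(ℝ³,ℂ) ∩ L²(ℝ³,ℂ), let n₁, …, n_{N_o} ∈ S² with positive weights Δ₁, …, Δ_{N_o}, and for each i fix R_{n_i} ∈ SO(3) with R_{n_i} e_z = n_i. Let ρ > 0 and suppose N_ψ^d(ω) = 1 for almost every ω in the ball B_ρ = {ω ∈ ℝ³ : ‖ω‖ < ρ}, where N_ψ^d(ω) = ∑_{i=1}^{N_o} Δ_i (𝓕ψ)(R_{n_i}ᵀ ω). Then for every f ∈ L¹(ℝ³,ℂ) ∩ L²(ℝ³,ℂ) with supp(𝓕f) ⊆ B_ρ, the image is reconstructed exactly by summation over orientations: ∑_{i=1}^{N_o} Δ_i (W_ψ^d f)(x, n_i) = f(x) as elements of L²(ℝ³,ℂ). -/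

import Mathlib

/-!
Each orientation score is the convolution of `f` with the reflected, conjugated, rotated wavelet
`y ↦ conj (ψ (R⁻¹ (-y)))`, whose Fourier transform is `conj (𝓕ψ (R⁻¹ ω))`. Hence the Fourier
transform of the weighted sum of scores is `conj (N_ψ^d) · 𝓕f`, which is `𝓕f` because
`N_ψ^d = 1` a.e. on the ball carrying `𝓕f`. Both sides are integrable, and the Fourier transform
is injective on `L¹`: testing against `𝓕φ` for Schwartz `φ` and using `∫ 𝓕φ · h = ∫ φ · 𝓕h`
shows that an integrable `h` with `𝓕h = 0` integrates to zero against every test function.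
-/

open MeasureTheory Real

noncomputable section

/-- 3D Euclidean space. -/
abbrev R3 : Type := EuclideanSpace ℝ (Fin 3)

/-- The unit sphere `S² ⊂ ℝ³`. -/
abbrev S2 : Type := Metric.sphere (0 : R3) 1

/-- The unit vector `e_z`. -/
def ez : R3 := EuclideanSpace.single 2 1

/-- The orientation score for a single orientation with rotation `R`:
`(W_ψ^d f)(x, n_i) = ∫ conj(ψ(R_{n_i}ᵀ(x'-x))) f(x') dx'`, with `R_{n_i}ᵀ = R.symm`. -/
def OScoreD (R : R3 ≃ₗᵢ[ℝ] R3) (ψ f : R3 → ℂ) (x : R3) : ℂ :=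
  ∫ x', (starRingEnd ℂ) (ψ (R.symm (x' - x))) * f x'

open Convolution ContinuousLinearMap
open scoped SchwartzMap FourierTransform ComplexConjugate

section Fourier

variable {V E : Type*} [NormedAddCommGroup V] [InnerProductSpace ℝ V]
  [MeasurableSpace V] [BorelSpace V] [FiniteDimensional ℝ V]
  [NormedAddCommGroup E] [NormedSpace ℂ E]

theorem Real.fourier_sub {f g : V → E} (hf : Integrable f) (hg : Integrable g) :
    𝓕 (f - g) = 𝓕 f - 𝓕 g := by
  ext w
  simp only [Real.fourier_eq, Pi.sub_apply, smul_sub]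
  exact integral_sub ((Real.fourierIntegral_convergent_iff w).2 hf)
    ((Real.fourierIntegral_convergent_iff w).2 hg)

theorem Real.fourier_sum_smul {ι : Type*} (s : Finset ι) (c : ι → ℂ) {u : ι → V → E}
    (hu : ∀ i ∈ s, Integrable (u i)) :
    𝓕 (∑ i ∈ s, c i • u i) = ∑ i ∈ s, c i • 𝓕 (u i) := by
  ext w
  simp only [Real.fourier_eq, Finset.sum_apply, Pi.smul_apply, Finset.smul_sum,
    smul_comm _ (c _)]
  rw [integral_finsetSum]
  · simp only [integral_smul]
  · exact fun i hi ↦ ((Real.fourierIntegral_convergent_iff w).2 (hu i hi)).smul (c i)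

theorem Real.fourier_sum_smul_convolution {ι : Type*} (s : Finset ι) (c : ι → ℂ)
    {g : ι → V → ℂ} {f : V → ℂ} (hg : ∀ i ∈ s, Integrable (g i)) (hf : Integrable f) :
    𝓕 (∑ i ∈ s, c i • (g i ⋆[mul ℂ ℂ] f)) = fun w ↦ (∑ i ∈ s, c i * 𝓕 (g i) w) * 𝓕 f w := by
  rw [Real.fourier_sum_smul s c fun i hi ↦ (hg i hi).integrable_convolution _ hf]
  ext w
  simp only [Finset.sum_apply, Pi.smul_apply, smul_eq_mul, Finset.sum_mul, mul_assoc]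
  exact Finset.sum_congr rfl fun i hi ↦ by rw [Real.fourier_mul_convolution_eq (hg i hi) hf]

theorem Real.fourier_conj_comp_neg (h : V → ℂ) (w : V) :
    𝓕 (fun v ↦ conj (h (-v))) w = conj (𝓕 h w) := by
  have hneg := Real.fourier_comp_linearIsometry (LinearIsometryEquiv.neg ℝ (E := V))
    (fun v ↦ conj (h v)) w
  simp only [Function.comp_def, LinearIsometryEquiv.coe_neg] at hneg
  rw [hneg, Real.fourier_eq, Real.fourier_eq, ← integral_conj]
  congr 1 with v
  simp [Circle.smul_def, inner_neg_right, ← Circle.coe_inv_eq_conj, AddChar.map_neg_eq_inv]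

theorem MeasureTheory.Integrable.ae_eq_zero_of_fourier_eq_zero {h : V → ℂ} (hh : Integrable h)
    (hFh : 𝓕 h = 0) : h =ᵐ[volume] 0 := by
  refine ae_eq_zero_of_integral_contDiff_smul_eq_zero hh.locallyIntegrable fun g hg hg_supp ↦ ?_
  let G : 𝓢(V, ℂ) := (hg_supp.comp_left Complex.ofReal_zero).toSchwartzMap
    (Complex.ofRealCLM.contDiff.comp hg)
  have hG : 𝓕 ((𝓕⁻ G : 𝓢(V, ℂ)) : V → ℂ) = fun x ↦ (g x : ℂ) := by
    rw [← SchwartzMap.fourier_coe, FourierTransform.fourier_fourierInv_eq]; rfl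
  have hself := VectorFourier.integral_fourierIntegral_smul_eq_flip (L := innerₗ V)
    Real.continuous_fourierChar continuous_inner ((𝓕⁻ G).integrable (μ := volume)) hh
  rw [flip_innerₗ] at hself
  change ∫ ξ, 𝓕 ((𝓕⁻ G : 𝓢(V, ℂ)) : V → ℂ) ξ • h ξ = ∫ x, (𝓕⁻ G) x • 𝓕 h x at hself
  simpa [hG, hFh] using hself

theorem MeasureTheory.Integrable.ae_eq_of_fourier_ae_eq {f g : V → ℂ} (hf : Integrable f)
    (hg : Integrable g) (hFfg : 𝓕 f =ᵐ[volume] 𝓕 g) : f =ᵐ[volume] g := by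
  have hcont : ∀ {u : V → ℂ}, Integrable u → Continuous (𝓕 u) := fun hu ↦
    VectorFourier.fourierIntegral_continuous Real.continuous_fourierChar continuous_inner hu
  have hFfg' : 𝓕 f = 𝓕 g := ((hcont hf).ae_eq_iff_eq volume (hcont hg)).1 hFfg
  rw [← sub_ae_eq_zero]
  exact (hf.sub hg).ae_eq_zero_of_fourier_eq_zero (by rw [Real.fourier_sub hf hg, hFfg', sub_self])

end Fourier

theorem mul_ae_eq_of_ae_restrict_eq_one {α M : Type*} [MeasurableSpace α] [MulZeroOneClass M]
    {μ : Measure α} {s : Set α} {N F : α → M} (hs : MeasurableSet s)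
    (hN : ∀ᵐ x ∂μ.restrict s, N x = 1) (hF : Function.support F ⊆ s) :
    (fun x ↦ N x * F x) =ᵐ[μ] F := by
  filter_upwards [(ae_restrict_iff' hs).1 hN] with x hx
  by_cases hxs : x ∈ s
  · rw [hx hxs, one_mul]
  · rw [Function.notMem_support.1 (mt (@hF x) hxs), mul_zero]

theorem OScoreD_eq_convolution (R : R3 ≃ₗᵢ[ℝ] R3) (ψ f : R3 → ℂ) :
    OScoreD R ψ f = (fun y ↦ conj (ψ (R.symm (-y)))) ⋆[mul ℂ ℂ] f := by
  ext x
  rw [convolution_def, OScoreD, ← integral_sub_left_eq_self _ volume x]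
  simp

theorem discrete_orientation_score_reconstruction_by_summation_general
    (ψ : R3 → ℂ) (hψ1 : MemLp ψ 1 (volume : Measure R3))
    (No : ℕ) (Δ : Fin No → ℝ)
    (R : Fin No → (R3 ≃ₗᵢ[ℝ] R3))
    (ρ : ℝ)
    (hNone : ∀ᵐ ω ∂(volume : Measure R3).restrict (Metric.ball (0 : R3) ρ),
      ∑ i, (Δ i : ℂ) * FourierTransform.fourier ψ ((R i).symm ω) = 1)
    (f : R3 → ℂ) (hf1 : MemLp f 1 (volume : Measure R3))
    (hsupp : Function.support (FourierTransform.fourier f) ⊆ Metric.ball (0 : R3) ρ) :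
    (fun x => ∑ i, (Δ i : ℂ) * OScoreD (R i) ψ f x) =ᵐ[(volume : Measure R3)] f := by
  have hψ : Integrable ψ := memLp_one_iff_integrable.1 hψ1
  have hf : Integrable f := memLp_one_iff_integrable.1 hf1
  set g : Fin No → R3 → ℂ := fun i y ↦ conj (ψ ((R i).symm (-y)))
  have hg : ∀ i, Integrable (g i) := fun i ↦
    (LinearIsometryEquiv.integrable_comp_iff Complex.conjLIE).2
      (((R i).symm.measurePreserving.integrable_comp hψ.aestronglyMeasurable).2 hψ).comp_neg
  have hFg : ∀ i w, 𝓕 (g i) w = conj (𝓕 ψ ((R i).symm w)) := fun i w ↦ by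
    change 𝓕 (fun v ↦ conj ((ψ ∘ (R i).symm) (-v))) w = _
    rw [Real.fourier_conj_comp_neg, Real.fourier_comp_linearIsometry]
  have hN : ∀ᵐ ω ∂volume.restrict (Metric.ball (0 : R3) ρ),
      ∑ i, (Δ i : ℂ) * 𝓕 (g i) ω = 1 :=
    hNone.mono fun ω hω ↦ by
      rw [← map_one (starRingEnd ℂ), ← hω, map_sum]
      simp [hFg]
  have hscore : (fun x ↦ ∑ i, (Δ i : ℂ) * OScoreD (R i) ψ f x)
      = ∑ i, (Δ i : ℂ) • (g i ⋆[mul ℂ ℂ] f) := by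
    ext x
    simp [OScoreD_eq_convolution, g]
  rw [hscore]
  refine (integrable_finsetSum' _ fun i _ ↦
    ((hg i).integrable_convolution _ hf).smul _).ae_eq_of_fourier_ae_eq hf ?_
  rw [Real.fourier_sum_smul_convolution _ _ (fun i _ ↦ hg i) hf]
  exact mul_ae_eq_of_ae_restrict_eq_one measurableSet_ball hN hsupp

/-- If `N_ψ^d = 1` a.e. on the ball `B_ρ`, then ball-limited data is reconstructed exactly from
its discrete orientation score by summation over orientations. -/
theorem discrete_orientation_score_reconstruction_by_summation
    (ψ : R3 → ℂ) (hψ1 : MemLp ψ 1 (volume : Measure R3)) (hψ2 : MemLp ψ 2 (volume : Measure R3))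
    (No : ℕ) (nvec : Fin No → S2) (Δ : Fin No → ℝ) (hΔ : ∀ i, 0 < Δ i)
    (R : Fin No → (R3 ≃ₗᵢ[ℝ] R3))
    (hdet : ∀ i, LinearMap.det ((R i).toLinearEquiv : R3 →ₗ[ℝ] R3) = 1)
    (hRez : ∀ i, R i ez = (nvec i : R3))
    (ρ : ℝ) (hρ : 0 < ρ)
    (hNone : ∀ᵐ ω ∂(volume : Measure R3).restrict (Metric.ball (0 : R3) ρ),
      ∑ i, (Δ i : ℂ) * FourierTransform.fourier ψ ((R i).symm ω) = 1)
    (f : R3 → ℂ) (hf1 : MemLp f 1 (volume : Measure R3)) (hf2 : MemLp f 2 (volume : Measure R3))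
    (hsupp : Function.support (FourierTransform.fourier f) ⊆ Metric.ball (0 : R3) ρ) :
    (fun x => ∑ i, (Δ i : ℂ) * OScoreD (R i) ψ f x) =ᵐ[(volume : Measure R3)] f :=
  discrete_orientation_score_reconstruction_by_summation_general ψ hψ1 No Δ R ρ hNone f hf1 hsupp
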